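/- In any commutative ring k with distinguished elements x and y: (i) if m is odd then [m]x = [m]y; (ii) if m is even then x·[m]y = y·[m]x. In particular, in an integral domain with xy ≠ 0 and m even, [m]x = 0 if and only if [m]y = 0. -/

import Mathlib

/-- The pair of two-colored quantum numbers `([n]x, [n]y)` attached to `x, y ∈ k`:
`[0]x = [0]y = 0`, `[1]x = [1]y = 1`, `[n+1]x = x·[n]y − [n−1]x`,
`[n+1]y = y·[n]x − [n−1]y`. -/
def tq {k : Type*} [CommRing k] (x y : k) : ℕ → k × k
  | 0 => (0, 0)
  | 1 => (1, 1)
  | n + 2 => (x * (tq x y (n + 1)).2 - (tq x y n).1,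
              y * (tq x y (n + 1)).1 - (tq x y n).2)

/-- The two-colored quantum number `[n]x`. -/
def qnx {k : Type*} [CommRing k] (x y : k) (n : ℕ) : k := (tq x y n).1

/-- The two-colored quantum number `[n]y`. -/
def qny {k : Type*} [CommRing k] (x y : k) (n : ℕ) : k := (tq x y n).2

/-! By two-step induction: the recursion for `[n+2]x` and `[n+2]y` differs only in
swapping `x ↔ y` in the leading coefficient, so equality at the odd index `n+2` follows from
`x·[n+1]y = y·[n+1]x` and `[n]x = [n]y`; multiplying the recursions by `x` resp. `y` turns the
leading terms into `xy·[n+1]y` and `xy·[n+1]x`, so the even identity at `n+2` follows from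
equality at `n+1` and the even identity at `n`. -/

section TwoColored

variable {k : Type*} [CommRing k] (x y : k)

@[simp] lemma qnx_zero : qnx x y 0 = 0 := rfl

@[simp] lemma qny_zero : qny x y 0 = 0 := rfl

@[simp] lemma qnx_one : qnx x y 1 = 1 := rfl

@[simp] lemma qny_one : qny x y 1 = 1 := rfl

lemma qnx_add_two (n : ℕ) : qnx x y (n + 2) = x * qny x y (n + 1) - qnx x y n := rfl

lemma qny_add_two (n : ℕ) : qny x y (n + 2) = y * qnx x y (n + 1) - qny x y n := rfl

lemma qnx_eq_qny_of_odd_and_mul_qny_eq_mul_qnx_of_even (n : ℕ) :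
    (Odd n → qnx x y n = qny x y n) ∧ (Even n → x * qny x y n = y * qnx x y n) := by
  induction n using Nat.twoStepInduction with
  | zero => simp
  | one => simp
  | more n ih₀ ih₁ =>
    refine ⟨fun hodd => ?_, fun heven => ?_⟩
    · have hn : Odd n := by simpa [Nat.odd_add] using hodd
      rw [qnx_add_two, qny_add_two, ih₁.2 hn.add_one, ih₀.1 hn]
    · have hn : Even n := by simpa [Nat.even_add] using heven
      rw [qnx_add_two, qny_add_two]
      linear_combination x * y * ih₁.1 hn.add_one - ih₀.2 hn

lemma qnx_eq_qny_of_odd {n : ℕ} (hn : Odd n) : qnx x y n = qny x y n :=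
  (qnx_eq_qny_of_odd_and_mul_qny_eq_mul_qnx_of_even x y n).1 hn

lemma mul_qny_eq_mul_qnx_of_even {n : ℕ} (hn : Even n) : x * qny x y n = y * qnx x y n :=
  (qnx_eq_qny_of_odd_and_mul_qny_eq_mul_qnx_of_even x y n).2 hn

lemma qnx_eq_zero_iff_qny_eq_zero_of_even [NoZeroDivisors k] {x y : k} (hxy : x * y ≠ 0)
    {n : ℕ} (hn : Even n) : qnx x y n = 0 ↔ qny x y n = 0 := by
  rw [← mul_eq_zero_iff_left (right_ne_zero_of_mul hxy), ← mul_qny_eq_mul_qnx_of_even x y hn,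
    mul_eq_zero_iff_left (left_ne_zero_of_mul hxy)]

end TwoColored

/-- (i) If `m` is odd then `[m]x = [m]y`; (ii) if `m` is even then `x·[m]y = y·[m]x`;
in particular, in an integral domain with `xy ≠ 0` and `m` even,
`[m]x = 0 ↔ [m]y = 0`. -/
theorem two_colored_qn_parity {k : Type*} [CommRing k] (x y : k) (m : ℕ) :
    (Odd m → qnx x y m = qny x y m) ∧
    (Even m → x * qny x y m = y * qnx x y m) ∧
    (IsDomain k → x * y ≠ 0 → Even m → (qnx x y m = 0 ↔ qny x y m = 0)) :=
  ⟨qnx_eq_qny_of_odd x y, mul_qny_eq_mul_qnx_of_even x y,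
    fun _ hxy hm => qnx_eq_zero_iff_qny_eq_zero_of_even hxy hm⟩
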